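/- A tree language L ⊆ T(Σ, {x1,…,xk}) (over a finite signature Σ with x1,…,xk treated as constants) is a regular tree language if and only if there exist a finite extension Σ′ of Σ by constants, a regular-EUF formula φ over Σ′ ∪ {f} with f of arity k, and a Σ′-compatible regular tree grammar G with L(G) ⊆ T(Σ, {x1,…,xk}), such that L = {w ∈ L(G) : φ{w/f} is valid}; i.e., the solution sets of regular SyGuS-EUF problems are exactly the regular tree languages. -/

import Mathlib

namespace SyGuS

/-- Terms over a ranked alphabet: symbols `F`, each of arity `ar f`. -/
inductive Tm (F : Type) (ar : F → ℕ) : Type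
  | app (f : F) (args : Fin (ar f) → Tm F ar) : Tm F ar

/-- Arity function on `F ⊕ Fin k`: the `k` extra symbols are constants
(the variables `x₁,…,x_k`, treated as constants). -/
abbrev varAr {F : Type} (ar : F → ℕ) (k : ℕ) : F ⊕ Fin k → ℕ := Sum.elim ar fun _ => 0

/-- Arity function on `F ⊕ Unit`: the extra symbol is the function symbol `f` of arity `k`. -/
abbrev fAr {F : Type} (ar : F → ℕ) (k : ℕ) : F ⊕ Unit → ℕ := Sum.elim ar fun _ => k

/-- A (nonempty) first-order structure for the ranked alphabet `(F, ar)`. -/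
structure Str (F : Type) (ar : F → ℕ) : Type 1 where
  D : Type
  [nonemptyD : Nonempty D]
  interp : (f : F) → (Fin (ar f) → D) → D

attribute [instance] Str.nonemptyD

/-- Evaluation of a ground term in a structure. -/
def Tm.eval {F : Type} {ar : F → ℕ} (M : Str F ar) : Tm F ar → M.D
  | .app f args => M.interp f fun i => (args i).eval M

/-- First-order substitution: replace the variables `x₁,…,x_k` by terms. -/
def Tm.instVars {F : Type} {ar : F → ℕ} {k : ℕ} (σ : Fin k → Tm F ar) :
    Tm (F ⊕ Fin k) (varAr ar k) → Tm F ar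
  | .app (Sum.inl g) args => .app g fun i => Tm.instVars σ (args i)
  | .app (Sum.inr i) _ => σ i

/-- Second-order substitution `·{w/f}`: replace every application `f(s₁,…,s_k)` of the
distinguished symbol `f` by `w{s₁/x₁,…,s_k/x_k}`. -/
def Tm.soSubst {F : Type} {ar : F → ℕ} {k : ℕ} (w : Tm (F ⊕ Fin k) (varAr ar k)) :
    Tm (F ⊕ Unit) (fAr ar k) → Tm F ar
  | .app (Sum.inl g) args => .app g fun i => Tm.soSubst w (args i)
  | .app (Sum.inr _) args => Tm.instVars (fun i => Tm.soSubst w (args i)) w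

/-- Renaming of symbols along an arity-preserving map. -/
def Tm.rename {F G : Type} {arF : F → ℕ} {arG : G → ℕ} (h : F → G)
    (hh : ∀ f, arG (h f) = arF f) : Tm F arF → Tm G arG
  | .app f args => .app (h f) fun i => (args (Fin.cast (hh f) i)).rename h hh

/-- Equational consequence: `E ⊢ s = t` iff every structure satisfying all
equations of `E` also satisfies `s = t`. -/
def EqCons {F : Type} {ar : F → ℕ} (E : Set (Tm F ar × Tm F ar)) (s t : Tm F ar) : Prop :=
  ∀ M : Str F ar, (∀ e ∈ E, Tm.eval M e.1 = Tm.eval M e.2) → s.eval M = t.eval M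

/-- Number of occurrences of the distinguished symbol `f` (the `Sum.inr` symbol) in a term. -/
def Tm.countF {F : Type} {ar : F → ℕ} {k : ℕ} : Tm (F ⊕ Unit) (fAr ar k) → ℕ
  | .app (Sum.inl _) args => ∑ i, Tm.countF (args i)
  | .app (Sum.inr _) args => 1 + ∑ i, Tm.countF (args i)

/-- A literal: a (non-negated if `pos`, negated otherwise) equation between terms. -/
structure Lit (F : Type) (ar : F → ℕ) : Type where
  pos : Bool
  lhs : Tm F ar
  rhs : Tm F ar

def Lit.holds {F : Type} {ar : F → ℕ} (M : Str F ar) (l : Lit F ar) : Prop :=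
  if l.pos then l.lhs.eval M = l.rhs.eval M else l.lhs.eval M ≠ l.rhs.eval M

/-- A clause: a disjunction of (possibly negated) equations, ITE-free by construction. -/
abbrev Clause (F : Type) (ar : F → ℕ) := List (Lit F ar)

def Clause.holds {F : Type} {ar : F → ℕ} (M : Str F ar) (c : Clause F ar) : Prop :=
  ∃ l ∈ c, l.holds M

/-- A clause is valid if it holds in every nonempty structure. -/
def Clause.valid {F : Type} {ar : F → ℕ} (c : Clause F ar) : Prop :=
  ∀ M : Str F ar, c.holds M

/-- Number of occurrences of `f` in a literal (an equation). -/
def Lit.countF {F : Type} {ar : F → ℕ} {k : ℕ} (l : Lit (F ⊕ Unit) (fAr ar k)) : ℕ :=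
  l.lhs.countF + l.rhs.countF

/-- Case-1 regular clause: every equation has at most one occurrence of `f`,
and `f` occurs only in non-negated equations. -/
def Clause.Case1 {F : Type} {ar : F → ℕ} {k : ℕ} (c : Clause (F ⊕ Unit) (fAr ar k)) : Prop :=
  (∀ l ∈ c, l.countF ≤ 1) ∧ (∀ l ∈ c, l.pos = false → l.countF = 0)

/-- Case-2 regular clause: every equation has at most one occurrence of `f`, and `f`
occurs in exactly one negated equation of the clause and nowhere else. -/
def Clause.Case2 {F : Type} {ar : F → ℕ} {k : ℕ} (c : Clause (F ⊕ Unit) (fAr ar k)) : Prop :=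
  (∀ l ∈ c, l.countF ≤ 1) ∧ (∀ l ∈ c, l.pos = true → l.countF = 0) ∧
  (c.filter (fun l => l.pos = false ∧ l.countF ≠ 0)).length = 1

/-- A regular clause is one of case 1 or case 2. -/
def Clause.Regular {F : Type} {ar : F → ℕ} {k : ℕ} (c : Clause (F ⊕ Unit) (fAr ar k)) : Prop :=
  c.Case1 ∨ c.Case2

/-- Second-order substitution `·{w/f}` on literals. -/
def Lit.soSubst {F : Type} {ar : F → ℕ} {k : ℕ} (w : Tm (F ⊕ Fin k) (varAr ar k))
    (l : Lit (F ⊕ Unit) (fAr ar k)) : Lit F ar :=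
  ⟨l.pos, Tm.soSubst w l.lhs, Tm.soSubst w l.rhs⟩

/-- Second-order substitution `·{w/f}` on clauses. -/
def Clause.soSubst {F : Type} {ar : F → ℕ} {k : ℕ} (w : Tm (F ⊕ Fin k) (varAr ar k))
    (c : Clause (F ⊕ Unit) (fAr ar k)) : Clause F ar :=
  c.map (Lit.soSubst w)

/-- A regular-EUF formula: a finite conjunction of regular clauses. -/
structure RegEUF (F : Type) (ar : F → ℕ) (k : ℕ) : Type where
  clauses : List (Clause (F ⊕ Unit) (fAr ar k))
  regular : ∀ c ∈ clauses, c.Regular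

/-- `w` is a solution for a regular-EUF formula if every clause becomes valid
after substituting `w` for `f`. -/
def RegEUF.solves {F : Type} {ar : F → ℕ} {k : ℕ} (φ : RegEUF F ar k)
    (w : Tm (F ⊕ Fin k) (varAr ar k)) : Prop :=
  ∀ c ∈ φ.clauses, (c.soSubst w).valid

/-- Deterministic bottom-up tree automaton with a partial transition function. -/
structure DTA (F : Type) (ar : F → ℕ) : Type 1 where
  Q : Type
  [fintypeQ : Fintype Q]
  δ : (f : F) → (Fin (ar f) → Q) → Option Q
  final : Set Q

attribute [instance] DTA.fintypeQ

/-- Sequence a finite tuple of options. -/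
def finSeq {Q : Type} : {n : ℕ} → (Fin n → Option Q) → Option (Fin n → Q)
  | 0, _ => some (fun i => i.elim0)
  | _ + 1, f => (f 0).bind fun q => (finSeq fun i => f i.succ).map (Fin.cons q)

/-- The (partial) run of the automaton on a term: `δ` extended to terms. -/
def DTA.run {F : Type} {ar : F → ℕ} (A : DTA F ar) : Tm F ar → Option A.Q
  | .app f args => (finSeq fun i => A.run (args i)).bind fun qs => A.δ f qs

/-- The language accepted by the automaton. -/
def DTA.lang {F : Type} {ar : F → ℕ} (A : DTA F ar) : Set (Tm F ar) :=
  { t | ∃ q ∈ A.final, A.run t = some q }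

/-- A tree language is regular if it is the language of some deterministic
bottom-up tree automaton. -/
def IsRegularTreeLang {F : Type} {ar : F → ℕ} (L : Set (Tm F ar)) : Prop :=
  ∃ A : DTA F ar, L = A.lang

/-- Regular tree grammars: finitely many productions rewriting a nonterminal `A` into
`g(t₁,…,t_k)`, where each `tᵢ` is a nonterminal or a ground term. -/
structure RTG (F : Type) (ar : F → ℕ) : Type 1 where
  N : Type
  [fintypeN : Fintype N]
  start : N
  prods : Set (N × Σ g : F, (Fin (ar g) → N ⊕ Tm F ar))
  finite_prods : prods.Finite

attribute [instance] RTG.fintypeN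

/-- Derivability of a term from a nonterminal of the grammar. -/
inductive RTG.Derives {F : Type} {ar : F → ℕ} (G : RTG F ar) : G.N → Tm F ar → Prop
  | step (A : G.N) (g : F) (args : Fin (ar g) → G.N ⊕ Tm F ar) (ts : Fin (ar g) → Tm F ar)
      (h : (A, ⟨g, args⟩) ∈ G.prods)
      (hnt : ∀ i B, args i = Sum.inl B → G.Derives B (ts i))
      (htm : ∀ i u, args i = Sum.inr u → ts i = u) :
      G.Derives A (.app g ts)

/-- The language of a regular tree grammar: terms derivable from the start symbol. -/
def RTG.lang {F : Type} {ar : F → ℕ} (G : RTG F ar) : Set (Tm F ar) :=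
  { t | G.Derives G.start t }

/-- Embedding of candidate expressions over `Σ ∪ {x₁,…,x_k}` into the terms over the
extension `Σ ∪ {c₁,…,c_c} ∪ {x₁,…,x_k}` of `Σ` by `c` fresh constants. -/
def embedW {F : Type} {ar : F → ℕ} {k c : ℕ} :
    Tm (F ⊕ Fin k) (varAr ar k) →
      Tm ((F ⊕ Fin c) ⊕ Fin k) (varAr (Sum.elim ar fun _ => 0) k) :=
  Tm.rename (Sum.map Sum.inl id) (by rintro (g | i) <;> rfl)


/-!
A tree language is regular iff it is a union of fibres of the evaluation map into a finite
structure. An automaton becomes a grammar whose nonterminals are its states plus a start symbol,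
with the empty formula. Conversely, the grammar language is recognised by the structure recording
which nonterminals derive a term, and the solutions of a regular clause by the following finite
model: with `S` the subterms of the `f`-free sides and `E` the `f`-free negated equations, take
`S / E` plus one point for all other terms. A ground clause is valid iff one of its equations
follows from its negated ones. As one side of each relevant equation lies in `S`, after
substituting `w` this depends only on the values in that model of the sides containing `f`, that
is, on the term function of `w` on the model. In case 2 this needs that an extra hypothesis
`u = t` with `u` outside `S` modulo `E` proves nothing new about `S`.
-/

section Basics

variable {H : Type} {ar : H → ℕ}

theorem finSeq_eq_some_iff {Q : Type} : ∀ {n : ℕ} (f : Fin n → Option Q) (g : Fin n → Q),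
    finSeq f = some g ↔ ∀ i, f i = some (g i)
  | 0, f, g => by simp [finSeq, funext_iff]
  | n + 1, f, g => by
    simp only [finSeq, Option.bind_eq_some_iff, Option.map_eq_some_iff, finSeq_eq_some_iff]
    constructor
    · rintro ⟨q, hq, r, hr, rfl⟩ i
      cases i using Fin.cases <;> simp [hq, hr]
    · intro h
      exact ⟨g 0, h 0, Fin.tail g, fun i => h i.succ, Fin.cons_self_tail g⟩

theorem finSeq_eq_none {Q : Type} {n : ℕ} {f : Fin n → Option Q} {i : Fin n} (h : f i = none) :
    finSeq f = none := by
  cases hf : finSeq f with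
  | none => rfl
  | some g => simp [(finSeq_eq_some_iff f g).1 hf i] at h

namespace Tm

theorem app_injective_args {g : H} : Function.Injective (Tm.app (ar := ar) g) := by
  intro a b h
  injection h

def subterms : Tm H ar → Set (Tm H ar)
  | .app g a => insert (.app g a) (⋃ i, (a i).subterms)

theorem mem_subterms_self (t : Tm H ar) : t ∈ t.subterms := by
  cases t; exact Set.mem_insert _ _

theorem subterms_app_subset {g : H} (a : Fin (ar g) → Tm H ar) (i : Fin (ar g)) :
    (a i).subterms ⊆ (Tm.app g a).subterms :=
  fun _ hz => Set.mem_insert_of_mem _ (Set.mem_iUnion_of_mem i hz)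

theorem subterms_finite (t : Tm H ar) : t.subterms.Finite := by
  induction t with
  | app g a ih => exact (Set.finite_iUnion ih).insert _

theorem subterms_subset {z t : Tm H ar} (h : z ∈ t.subterms) : z.subterms ⊆ t.subterms := by
  induction t with
  | app g a ih =>
    rcases h with rfl | h
    · exact le_rfl
    · obtain ⟨i, hi⟩ := Set.mem_iUnion.1 h
      exact (ih i hi).trans (subterms_app_subset a i)

variable {G : Type} {arG : G → ℕ} {h : H → G} {hh : ∀ f, arG (h f) = ar f}

theorem rename_app (f : H) (a : Fin (ar f) → Tm H ar) :
    (Tm.app f a).rename h hh = .app (h f) fun i => (a (Fin.cast (hh f) i)).rename h hh := rfl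

theorem rename_injective (hinj : Function.Injective h) :
    Function.Injective (Tm.rename (arF := ar) (arG := arG) h hh) := by
  intro x
  induction x with
  | app f a ih =>
    rintro ⟨f', a'⟩ e
    rw [rename_app, rename_app] at e
    obtain rfl : f = f' := hinj (by injection e)
    have hargs := app_injective_args e
    congr 1
    funext j
    simpa using ih j (congrFun hargs (Fin.cast (hh f).symm j))

end Tm

namespace Str

def pi {ι : Type} (M : ι → Str H ar) : Str H ar where
  D := ∀ i, (M i).D
  nonemptyD := ⟨fun _ => Classical.arbitrary _⟩
  interp g d i := (M i).interp g fun j => d j i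

theorem eval_pi {ι : Type} (M : ι → Str H ar) (t : Tm H ar) (i : ι) :
    t.eval (pi M) i = t.eval (M i) := by
  induction t with
  | app g a ih => exact congrArg ((M i).interp g) (funext ih)

def clone (M : Str H ar) (k : ℕ) : Str (H ⊕ Fin k) (varAr ar k) where
  D := (Fin k → M.D) → M.D
  interp
    | .inl g, d => fun ρ => M.interp g fun i => d i ρ
    | .inr j, _ => fun ρ => ρ j

def withF (M : Str H ar) {k : ℕ} (F : (Fin k → M.D) → M.D) : Str (H ⊕ Unit) (fAr ar k) where
  D := M.D
  interp
    | .inl g, d => M.interp g d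
    | .inr _, d => F d

def comap {G : Type} {arG : G → ℕ} (M : Str G arG) (h : H → G)
    (hh : ∀ f, arG (h f) = ar f) : Str H ar where
  D := M.D
  interp f d := M.interp (h f) fun i => d (Fin.cast (hh f) i)

open Classical in
noncomputable def patch (M : Str H ar) (v₀ v₁ : M.D) : Str H ar where
  D := M.D
  interp g d := if M.interp g d = v₀ then v₁ else M.interp g d

end Str

namespace Tm

theorem eval_instVars (M : Str H ar) {k : ℕ} (σ : Fin k → Tm H ar)
    (v : Tm (H ⊕ Fin k) (varAr ar k)) :
    (v.instVars σ).eval M = v.eval (M.clone k) fun i => (σ i).eval M := by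
  induction v with
  | app f a ih =>
    cases f with
    | inl g => exact congrArg (M.interp g) (funext ih)
    | inr j => rfl

theorem eval_soSubst (M : Str H ar) {k : ℕ} (w : Tm (H ⊕ Fin k) (varAr ar k))
    (m : Tm (H ⊕ Unit) (fAr ar k)) :
    (soSubst w m).eval M = m.eval (M.withF (w.eval (M.clone k))) := by
  induction m with
  | app f a ih =>
    cases f with
    | inl g => exact congrArg (M.interp g) (funext ih)
    | inr _ =>
      exact (eval_instVars M _ w).trans (congrArg (w.eval (M.clone k)) (funext ih))

theorem eval_rename {G : Type} {arG : G → ℕ} (M : Str G arG) (h : H → G)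
    (hh : ∀ f, arG (h f) = ar f) (t : Tm H ar) :
    (t.rename h hh).eval M = t.eval (M.comap h hh) := by
  induction t with
  | app f a ih => simp only [rename, eval, ih]; rfl

open Classical in
theorem eval_patch_app (M : Str H ar) (v₀ v₁ : M.D) {g : H} {a : Fin (ar g) → Tm H ar}
    (ha : ∀ i, (a i).eval (M.patch v₀ v₁) = (a i).eval M) :
    (Tm.app g a).eval (M.patch v₀ v₁) =
      if (Tm.app g a).eval M = v₀ then v₁ else (Tm.app g a).eval M := by
  simp only [eval, ha]; rfl

theorem eval_patch_of_forall_ne (M : Str H ar) (v₀ v₁ : M.D) {t : Tm H ar}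
    (ht : ∀ z ∈ t.subterms, z.eval M ≠ v₀) : t.eval (M.patch v₀ v₁) = t.eval M := by
  induction t with
  | app g a ih =>
    rw [eval_patch_app M v₀ v₁ fun i => ih i fun z hz => ht z (subterms_app_subset a i hz),
      if_neg (ht _ (mem_subterms_self _))]

end Tm

end Basics

section Recognizable

variable {H : Type} {ar : H → ℕ}

noncomputable def Str.toDTA (M : Str H ar) [Finite M.D] (final : Set M.D) : DTA H ar where
  Q := M.D
  fintypeQ := Fintype.ofFinite _
  δ g d := some (M.interp g d)
  final := final

theorem Str.run_toDTA (M : Str H ar) [Finite M.D] (final : Set M.D) (t : Tm H ar) :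
    (M.toDTA final).run t = some (t.eval M) := by
  induction t with
  | app g a ih =>
    have hargs : (finSeq fun i => (M.toDTA final).run (a i)) = some fun i => (a i).eval M :=
      (finSeq_eq_some_iff _ _).2 ih
    simp only [DTA.run, hargs]
    rfl

def IsRecognizable (L : Set (Tm H ar)) : Prop :=
  ∃ (M : Str H ar) (_ : Finite M.D), ∀ t t', t.eval M = t'.eval M → t ∈ L → t' ∈ L

namespace IsRecognizable

theorem isRegularTreeLang {L : Set (Tm H ar)} (hL : IsRecognizable L) : IsRegularTreeLang L := by
  obtain ⟨M, _, hsat⟩ := hL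
  refine ⟨M.toDTA ((Tm.eval M) '' L), Set.ext fun t => ?_⟩
  constructor
  · exact fun ht => ⟨t.eval M, ⟨t, ht, rfl⟩, M.run_toDTA _ t⟩
  · rintro ⟨_, ⟨t', ht', rfl⟩, hq⟩
    rw [Str.run_toDTA] at hq
    exact hsat t' t (Option.some.inj hq).symm ht'

theorem iInter {ι : Type} [Finite ι] {L : ι → Set (Tm H ar)}
    (hL : ∀ i, IsRecognizable (L i)) : IsRecognizable (⋂ i, L i) := by
  choose M hfin hsat using hL
  refine ⟨Str.pi M, Pi.finite, fun t t' he ht => Set.mem_iInter.2 fun i => ?_⟩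
  have hi := congrFun he i
  rw [Str.eval_pi, Str.eval_pi] at hi
  exact hsat i t t' hi (Set.mem_iInter.1 ht i)

theorem inter {L₁ L₂ : Set (Tm H ar)} (h₁ : IsRecognizable L₁)
    (h₂ : IsRecognizable L₂) : IsRecognizable (L₁ ∩ L₂) := by
  rw [Set.inter_eq_iInter]
  exact iInter fun b => by cases b <;> assumption

theorem preimage_rename {G : Type} {arG : G → ℕ} {L : Set (Tm G arG)} (hL : IsRecognizable L)
    (h : H → G) (hh : ∀ f, arG (h f) = ar f) : IsRecognizable (Tm.rename h hh ⁻¹' L) := by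
  obtain ⟨M, hfin, hsat⟩ := hL
  refine ⟨M.comap h hh, hfin, fun t t' he ht => hsat _ _ ?_ ht⟩
  rwa [Tm.eval_rename, Tm.eval_rename]

end IsRecognizable

end Recognizable

section Validity

variable {H : Type} {ar : H → ℕ}

def Str.Models (M : Str H ar) (E : Set (Tm H ar × Tm H ar)) : Prop :=
  ∀ e ∈ E, e.1.eval M = e.2.eval M

namespace EqCons

variable {E : Set (Tm H ar × Tm H ar)}

theorem refl (E : Set (Tm H ar × Tm H ar)) (s : Tm H ar) : EqCons E s s := fun _ _ => rfl

theorem symm {s t : Tm H ar} (h : EqCons E s t) : EqCons E t s := fun M hM => (h M hM).symm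

theorem trans {s t u : Tm H ar} (h₁ : EqCons E s t) (h₂ : EqCons E t u) : EqCons E s u :=
  fun M hM => (h₁ M hM).trans (h₂ M hM)

theorem of_mem {s t : Tm H ar} (h : (s, t) ∈ E) : EqCons E s t := fun _ hM => hM _ h

theorem mono {E' : Set (Tm H ar × Tm H ar)} (hE : E ⊆ E') {s t : Tm H ar} (h : EqCons E s t) :
    EqCons E' s t :=
  fun M hM => h M fun e he => hM e (hE he)

theorem app {g : H} {a b : Fin (ar g) → Tm H ar} (h : ∀ i, EqCons E (a i) (b i)) :
    EqCons E (.app g a) (.app g b) :=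
  fun M hM => congrArg (M.interp g) (funext fun i => h i M hM)

theorem insert_swap (u t : Tm H ar) : EqCons (insert (u, t) E) = EqCons (insert (t, u) E) := by
  have models_swap :
      ∀ M : Str H ar, M.Models (insert (u, t) E) ↔ M.Models (insert (t, u) E) := by
    intro M
    simp only [Str.Models, Set.forall_mem_insert]
    exact and_congr_left' eq_comm
  ext x y
  exact forall_congr' fun M => imp_congr_left (models_swap M)

theorem insert_congr {u u' t x y : Tm H ar} (hu : EqCons E u u')
    (h : EqCons (insert (u, t) E) x y) : EqCons (insert (u', t) E) x y := by
  intro M hM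
  have hE : M.Models E := fun e he => hM e (Set.mem_insert_of_mem _ he)
  refine h M (Set.forall_mem_insert.2 ⟨?_, hE⟩)
  exact (hu M hE).trans (hM _ (Set.mem_insert _ _))

end EqCons

def Clause.negPairs (c : Clause H ar) : Set (Tm H ar × Tm H ar) :=
  {p | ∃ l ∈ c, l.pos = false ∧ (l.lhs, l.rhs) = p}

/-- The forward direction takes the product of countermodels, one for each equation. -/
theorem Clause.valid_iff_exists_eqCons (c : Clause H ar) :
    c.valid ↔ ∃ l ∈ c, l.pos = true ∧ EqCons c.negPairs l.lhs l.rhs := by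
  constructor
  · intro hc
    by_contra! hcons
    simp only [EqCons, not_forall, exists_prop] at hcons
    choose M hM hne using fun l : {l // l ∈ c ∧ l.pos = true} => hcons l.1 l.2.1 l.2.2
    have hP : (Str.pi M).Models c.negPairs := by
      rintro _ ⟨l, hl, hneg, rfl⟩
      exact funext fun i => by rw [Str.eval_pi, Str.eval_pi]; exact hM i _ ⟨l, hl, hneg, rfl⟩
    obtain ⟨l, hl, hholds⟩ := hc (Str.pi M)
    cases hpos : l.pos
    · simp only [Lit.holds, hpos] at hholds
      exact hholds (hP _ ⟨l, hl, hpos, rfl⟩)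
    · simp only [Lit.holds, hpos, if_true] at hholds
      have := congrFun hholds ⟨l, hl, hpos⟩
      rw [Str.eval_pi, Str.eval_pi] at this
      exact hne _ this
  · rintro ⟨l, hl, hpos, hcons⟩ M
    by_cases hM : M.Models c.negPairs
    · exact ⟨l, hl, by simpa [Lit.holds, hpos] using hcons M hM⟩
    · simp only [Str.Models, not_forall] at hM
      obtain ⟨_, ⟨l', hl', hneg, rfl⟩, hne⟩ := hM
      exact ⟨l', hl', by simpa [Lit.holds, hneg] using hne⟩

end Validity

section CanonicalModel

open Classical

variable {H : Type} {ar : H → ℕ} (E : Set (Tm H ar × Tm H ar)) (S : Set (Tm H ar))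

def eqConsSetoid : Setoid S :=
  ⟨fun a b => EqCons E a b, ⟨fun a => EqCons.refl E a, EqCons.symm, EqCons.trans⟩⟩

noncomputable def canon (z : Tm H ar) : Option (Quotient (eqConsSetoid E S)) :=
  if h : ∃ s : S, EqCons E z s then some ⟦h.choose⟧ else none

/-- `S / E` plus a point `none` absorbing all terms not equivalent modulo `E` to a term of `S`. -/
noncomputable def canonStr : Str H ar where
  D := Option (Quotient (eqConsSetoid E S))
  interp g d := (finSeq d).bind fun qs => canon E S (.app g fun i => (qs i).out)

/-- A refinement of `canonStr` counting the height of the part of a term outside `S`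
modulo `E`; it separates such a term from its proper subterms. -/
noncomputable def gradedStr : Str H ar where
  D := (canonStr E S).D × ℕ
  interp g d :=
    let o := (canonStr E S).interp g fun i => (d i).1
    (o, if o.isSome then 0 else ∑ i, (d i).2 + 1)

variable {E S}

theorem canon_of_eqCons {z s : Tm H ar} (h : EqCons E z s) (hs : s ∈ S) :
    canon E S z = some ⟦⟨s, hs⟩⟧ := by
  have hex : ∃ s : S, EqCons E z s := ⟨⟨s, hs⟩, h⟩
  rw [canon, dif_pos hex]
  exact congrArg some (Quotient.sound (hex.choose_spec.symm.trans h))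

theorem eqCons_of_canon_eq_some {z : Tm H ar} {q : Quotient (eqConsSetoid E S)}
    (h : canon E S z = some q) : EqCons E z q.out := by
  rw [canon] at h
  split_ifs at h with hex
  rw [← Option.some.inj h]
  exact hex.choose_spec.trans (Quotient.mk_out (s := eqConsSetoid E S) hex.choose).symm

theorem eqCons_of_eval_canonStr_eq_some {t : Tm H ar} {q : Quotient (eqConsSetoid E S)}
    (h : t.eval (canonStr E S) = some q) : EqCons E t q.out := by
  induction t generalizing q with
  | app g a ih =>
    obtain ⟨qs, hqs, hq⟩ := Option.bind_eq_some_iff.1 h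
    have hargs := (finSeq_eq_some_iff (Q := Quotient (eqConsSetoid E S)) _ _).1 hqs
    exact (EqCons.app fun i => ih i (hargs i)).trans (eqCons_of_canon_eq_some hq)

theorem eval_canonStr_eq_none_of_mem_subterms {z t : Tm H ar} (hz : z ∈ t.subterms)
    (h : z.eval (canonStr E S) = none) : t.eval (canonStr E S) = none := by
  induction t with
  | app g a ih =>
    rcases hz with rfl | hz
    · exact h
    · obtain ⟨i, hi⟩ := Set.mem_iUnion.1 hz
      have hnone : finSeq (Q := Quotient (eqConsSetoid E S))
          (fun j => (a j).eval (canonStr E S)) = none := finSeq_eq_none (ih i hi)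
      show Option.bind _ _ = none
      rw [hnone]
      rfl

theorem finite_canonStr (hfin : S.Finite) : Finite (canonStr E S).D :=
  have := hfin.to_subtype
  inferInstanceAs (Finite (Option (Quotient (eqConsSetoid E S))))

theorem fst_eval_gradedStr (t : Tm H ar) :
    (t.eval (gradedStr E S)).1 = t.eval (canonStr E S) := by
  induction t with
  | app g a ih => exact congrArg ((canonStr E S).interp g) (funext ih)

theorem eval_gradedStr_of_isSome {t : Tm H ar} (h : (t.eval (canonStr E S)).isSome) :
    t.eval (gradedStr E S) = (t.eval (canonStr E S), 0) := by
  cases t with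
  | app g a =>
    have hfst := fst_eval_gradedStr (E := E) (S := S) (.app g a)
    refine Prod.ext hfst ?_
    show (if ((canonStr E S).interp g fun i => ((a i).eval (gradedStr E S)).1).isSome
      then 0 else _) = 0
    exact if_pos (by rw [← hfst] at h; exact h)

theorem snd_eval_gradedStr_app {g : H} {a : Fin (ar g) → Tm H ar}
    (h : (Tm.app g a).eval (canonStr E S) = none) :
    ((Tm.app g a).eval (gradedStr E S)).2 = ∑ i, ((a i).eval (gradedStr E S)).2 + 1 := by
  rw [← fst_eval_gradedStr] at h
  have hnot : ¬ ((canonStr E S).interp g fun i => ((a i).eval (gradedStr E S)).1).isSome := by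
    change ¬ ((Tm.app g a).eval (gradedStr E S)).1.isSome
    simp [h]
  exact if_neg hnot

theorem snd_eval_gradedStr_lt {g : H} {a : Fin (ar g) → Tm H ar} {i : Fin (ar g)}
    (h : (a i).eval (canonStr E S) = none) :
    ((a i).eval (gradedStr E S)).2 < ((Tm.app g a).eval (gradedStr E S)).2 := by
  rw [snd_eval_gradedStr_app (eval_canonStr_eq_none_of_mem_subterms
    (Tm.subterms_app_subset a i (Tm.mem_subterms_self _)) h)]
  exact Nat.lt_succ_of_le (Finset.single_le_sum (f := fun j => ((a j).eval (gradedStr E S)).2)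
    (fun _ _ => Nat.zero_le _) (Finset.mem_univ i))

theorem snd_eval_gradedStr_le {z t : Tm H ar} (hz : z ∈ t.subterms)
    (h : z.eval (canonStr E S) = none) :
    (z.eval (gradedStr E S)).2 ≤ (t.eval (gradedStr E S)).2 := by
  induction t with
  | app g a ih =>
    rcases hz with rfl | hz
    · exact le_rfl
    · obtain ⟨i, hi⟩ := Set.mem_iUnion.1 hz
      exact (ih i hi).trans
        (snd_eval_gradedStr_lt (eval_canonStr_eq_none_of_mem_subterms hi h)).le

theorem eval_gradedStr_ne_of_mem_subterms {g : H} {a : Fin (ar g) → Tm H ar} {i : Fin (ar g)}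
    {z : Tm H ar} (hu : (Tm.app g a).eval (canonStr E S) = none) (hz : z ∈ (a i).subterms) :
    z.eval (gradedStr E S) ≠ (Tm.app g a).eval (gradedStr E S) := by
  intro he
  cases hzc : z.eval (canonStr E S) with
  | none =>
    have hlt := (snd_eval_gradedStr_le hz hzc).trans_lt
      (snd_eval_gradedStr_lt (eval_canonStr_eq_none_of_mem_subterms hz hzc))
    rw [he] at hlt
    exact lt_irrefl _ hlt
  | some q =>
    have hfst := congrArg Prod.fst he
    rw [fst_eval_gradedStr, fst_eval_gradedStr, hu, hzc] at hfst
    exact Option.some_ne_none q hfst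

variable (hS : ∀ s ∈ S, s.subterms ⊆ S) (hE : ∀ p ∈ E, p.1 ∈ S ∧ p.2 ∈ S)
include hS

theorem eval_canonStr_of_mem {s : Tm H ar} (hs : s ∈ S) :
    s.eval (canonStr E S) = some ⟦⟨s, hs⟩⟧ := by
  induction s with
  | app g a ih =>
    have ha : ∀ i, a i ∈ S :=
      fun i => hS _ hs (Tm.subterms_app_subset a i (Tm.mem_subterms_self _))
    show Option.bind _ _ = _
    rw [(finSeq_eq_some_iff (Q := Quotient (eqConsSetoid E S)) _ _).2 fun i => ih i (ha i)]
    refine canon_of_eqCons (EqCons.app fun i => ?_) hs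
    exact Quotient.mk_out (s := eqConsSetoid E S) ⟨a i, ha i⟩

theorem eval_gradedStr_of_mem {s : Tm H ar} (hs : s ∈ S) :
    s.eval (gradedStr E S) = (some ⟦⟨s, hs⟩⟧, 0) := by
  rw [eval_gradedStr_of_isSome (by rw [eval_canonStr_of_mem hS hs]; rfl),
    eval_canonStr_of_mem hS hs]
  rfl

include hE

theorem canonStr_models : (canonStr E S).Models E := by
  intro p hp
  rw [eval_canonStr_of_mem hS (hE p hp).1, eval_canonStr_of_mem hS (hE p hp).2]
  exact congrArg some (Quotient.sound (EqCons.of_mem hp))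

theorem eqCons_iff_eval_canonStr_eq {a b : Tm H ar} (hb : b ∈ S) :
    EqCons E a b ↔ a.eval (canonStr E S) = b.eval (canonStr E S) := by
  refine ⟨fun h => h _ (canonStr_models hS hE), fun h => ?_⟩
  rw [eval_canonStr_of_mem hS hb] at h
  exact (eqCons_of_eval_canonStr_eq_some h).trans
    (Quotient.mk_out (s := eqConsSetoid E S) ⟨b, hb⟩)

theorem gradedStr_models : (gradedStr E S).Models E := by
  intro p hp
  rw [eval_gradedStr_of_mem hS (hE p hp).1, eval_gradedStr_of_mem hS (hE p hp).2]
  exact congrArg (fun q => (some q, 0)) (Quotient.sound (EqCons.of_mem hp))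

/-- Countermodel: in `gradedStr` no proper subterm of `u` takes the value of `u`, so redirecting
that value to the value of `t` changes the value of `u` and of no term of `S`. -/
theorem EqCons.of_insert_of_eval_canonStr_eq_none {u t x y : Tm H ar}
    (hu : u.eval (canonStr E S) = none) (ht : t ∈ S) (hx : x ∈ S) (hy : y ∈ S)
    (h : EqCons (insert (u, t) E) x y) : EqCons E x y := by
  let P := (gradedStr E S).patch (u.eval (gradedStr E S)) (t.eval (gradedStr E S))
  have eval_P_of_mem : ∀ s ∈ S, s.eval P = s.eval (gradedStr E S) := by
    intro s hs
    refine Tm.eval_patch_of_forall_ne _ _ _ fun z hz he => ?_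
    have hfst := congrArg Prod.fst he
    rw [eval_gradedStr_of_mem hS (hS s hs hz), fst_eval_gradedStr, hu] at hfst
    exact Option.some_ne_none _ hfst
  have eval_P_u : u.eval P = t.eval (gradedStr E S) := by
    obtain ⟨g, a⟩ := u
    rw [Tm.eval_patch_app _ _ _ fun i => Tm.eval_patch_of_forall_ne _ _ _
      fun _ hz => eval_gradedStr_ne_of_mem_subterms hu hz, if_pos rfl]
  have hP : P.Models (insert (u, t) E) := by
    refine Set.forall_mem_insert.2 ⟨eval_P_u.trans (eval_P_of_mem t ht).symm, fun p hp => ?_⟩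
    rw [eval_P_of_mem _ (hE p hp).1, eval_P_of_mem _ (hE p hp).2]
    exact gradedStr_models hS hE p hp
  have hxy := h P hP
  rw [eval_P_of_mem x hx, eval_P_of_mem y hy] at hxy
  rw [eqCons_iff_eval_canonStr_eq hS hE hy, ← fst_eval_gradedStr, ← fst_eval_gradedStr, hxy]

theorem eqCons_insert_iff_of_eval_canonStr_eq {u u' t x y : Tm H ar}
    (hu : u.eval (canonStr E S) = u'.eval (canonStr E S)) (ht : t ∈ S) (hx : x ∈ S)
    (hy : y ∈ S) : EqCons (insert (u, t) E) x y ↔ EqCons (insert (u', t) E) x y := by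
  cases hq : u.eval (canonStr E S) with
  | none =>
    rw [hq] at hu
    have fresh : ∀ {v : Tm H ar}, v.eval (canonStr E S) = none →
        EqCons (insert (v, t) E) x y → EqCons E x y :=
      fun hv => EqCons.of_insert_of_eval_canonStr_eq_none hS hE hv ht hx hy
    exact ⟨fun h => (fresh hq h).mono (Set.subset_insert _ _),
      fun h => (fresh hu.symm h).mono (Set.subset_insert _ _)⟩
  | some q =>
    rw [hq] at hu
    have huu' : EqCons E u u' :=
      (eqCons_of_eval_canonStr_eq_some hq).trans (eqCons_of_eval_canonStr_eq_some hu.symm).symm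
    exact ⟨EqCons.insert_congr huu', EqCons.insert_congr huu'.symm⟩

end CanonicalModel

section Clauses

variable {H : Type} {ar : H → ℕ} {k : ℕ}

namespace Tm

def liftF : Tm H ar → Tm (H ⊕ Unit) (fAr ar k) := Tm.rename Sum.inl fun _ => rfl

theorem liftF_injective : Function.Injective (liftF (ar := ar) (k := k)) :=
  rename_injective Sum.inl_injective

theorem soSubst_liftF (w : Tm (H ⊕ Fin k) (varAr ar k)) (x : Tm H ar) :
    soSubst w x.liftF = x := by
  induction x with
  | app g a ih => exact congrArg (Tm.app g) (funext ih)

theorem exists_liftF_of_countF_eq_zero {m : Tm (H ⊕ Unit) (fAr ar k)} (h : m.countF = 0) :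
    ∃ x : Tm H ar, x.liftF = m := by
  induction m with
  | app f a ih =>
    cases f with
    | inl g =>
      have hsum : ∑ i, (a i).countF = 0 := h
      choose xs hxs using fun i => ih i (Finset.sum_eq_zero_iff.1 hsum i (Finset.mem_univ i))
      exact ⟨.app g xs, congrArg (Tm.app (Sum.inl g)) (funext hxs)⟩
    | inr _ =>
      have : 1 + ∑ i, (a i).countF = 0 := h
      omega

end Tm

theorem Lit.exists_liftF_side {l : Lit (H ⊕ Unit) (fAr ar k)} (h : l.countF ≤ 1) :
    ∃ x : Tm H ar, x.liftF = l.lhs ∨ x.liftF = l.rhs := by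
  have : l.lhs.countF = 0 ∨ l.rhs.countF = 0 := by unfold Lit.countF at h; omega
  rcases this with h | h
  · obtain ⟨x, hx⟩ := Tm.exists_liftF_of_countF_eq_zero h
    exact ⟨x, .inl hx⟩
  · obtain ⟨x, hx⟩ := Tm.exists_liftF_of_countF_eq_zero h
    exact ⟨x, .inr hx⟩

theorem Lit.exists_liftF_sides {l : Lit (H ⊕ Unit) (fAr ar k)} (h : l.countF = 0) :
    ∃ x y : Tm H ar, x.liftF = l.lhs ∧ y.liftF = l.rhs := by
  have hl : l.lhs.countF = 0 := by unfold Lit.countF at h; omega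
  have hr : l.rhs.countF = 0 := by unfold Lit.countF at h; omega
  obtain ⟨x, hx⟩ := Tm.exists_liftF_of_countF_eq_zero hl
  obtain ⟨y, hy⟩ := Tm.exists_liftF_of_countF_eq_zero hr
  exact ⟨x, y, hx, hy⟩

namespace Clause

variable (cl : Clause (H ⊕ Unit) (fAr ar k))

def fFreeTerms : Set (Tm H ar) :=
  {x | ∃ l ∈ cl, ∃ y : Tm H ar, (y.liftF = l.lhs ∨ y.liftF = l.rhs) ∧ x ∈ y.subterms}

def fFreeNegPairs : Set (Tm H ar × Tm H ar) :=
  {p | ∃ l ∈ cl, l.pos = false ∧ p.1.liftF = l.lhs ∧ p.2.liftF = l.rhs}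

noncomputable abbrev model : Str H ar := canonStr cl.fFreeNegPairs cl.fFreeTerms

variable {cl}

theorem mem_fFreeTerms {l : Lit (H ⊕ Unit) (fAr ar k)} (hl : l ∈ cl) {y : Tm H ar}
    (hy : y.liftF = l.lhs ∨ y.liftF = l.rhs) : y ∈ cl.fFreeTerms :=
  ⟨l, hl, y, hy, Tm.mem_subterms_self y⟩

variable (cl)

theorem fFreeTerms_finite : cl.fFreeTerms.Finite := by
  refine Set.Finite.subset (cl.finite_toSet.biUnion fun l _ =>
    ((Set.toFinite {l.lhs, l.rhs}).preimage Tm.liftF_injective.injOn |>.biUnion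
      fun y _ => y.subterms_finite)) ?_
  rintro x ⟨l, hl, y, hy, hx⟩
  exact Set.mem_biUnion hl (Set.mem_biUnion (by simpa [or_comm, eq_comm] using hy) hx)

theorem subterms_subset_fFreeTerms : ∀ s ∈ cl.fFreeTerms, s.subterms ⊆ cl.fFreeTerms := by
  rintro s ⟨l, hl, y, hy, hs⟩ z hz
  exact ⟨l, hl, y, hy, Tm.subterms_subset hs hz⟩

theorem fFreeNegPairs_subset :
    ∀ p ∈ cl.fFreeNegPairs, p.1 ∈ cl.fFreeTerms ∧ p.2 ∈ cl.fFreeTerms :=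
  fun _ ⟨_, hl, _, h1, h2⟩ => ⟨mem_fFreeTerms hl (.inl h1), mem_fFreeTerms hl (.inr h2)⟩

theorem negPairs_soSubst (w : Tm (H ⊕ Fin k) (varAr ar k)) :
    (Clause.soSubst w cl).negPairs =
      {p | ∃ l ∈ cl, l.pos = false ∧ (Tm.soSubst w l.lhs, Tm.soSubst w l.rhs) = p} := by
  simp [negPairs, Clause.soSubst, Lit.soSubst]

theorem valid_soSubst_iff (w : Tm (H ⊕ Fin k) (varAr ar k)) :
    (Clause.soSubst w cl).valid ↔ ∃ l ∈ cl, l.pos = true ∧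
      EqCons (Clause.soSubst w cl).negPairs (Tm.soSubst w l.lhs) (Tm.soSubst w l.rhs) := by
  rw [valid_iff_exists_eqCons]
  simp [Clause.soSubst, Lit.soSubst]

variable {cl}

theorem soSubst_mem_fFreeNegPairs {l : Lit (H ⊕ Unit) (fAr ar k)} (hl : l ∈ cl)
    (hneg : l.pos = false) (h0 : l.countF = 0) (w : Tm (H ⊕ Fin k) (varAr ar k)) :
    (Tm.soSubst w l.lhs, Tm.soSubst w l.rhs) ∈ cl.fFreeNegPairs := by
  obtain ⟨x, y, hx, hy⟩ := Lit.exists_liftF_sides h0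
  refine ⟨l, hl, hneg, ?_⟩
  rw [← hx, ← hy, Tm.soSubst_liftF, Tm.soSubst_liftF]
  exact ⟨rfl, rfl⟩

theorem fFreeNegPairs_subset_negPairs_soSubst (w : Tm (H ⊕ Fin k) (varAr ar k)) :
    cl.fFreeNegPairs ⊆ (Clause.soSubst w cl).negPairs := by
  rintro p ⟨l, hl, hneg, h1, h2⟩
  rw [negPairs_soSubst]
  exact ⟨l, hl, hneg, by rw [← h1, ← h2, Tm.soSubst_liftF, Tm.soSubst_liftF]⟩

theorem Case1.negPairs_soSubst_eq (hc : cl.Case1) (w : Tm (H ⊕ Fin k) (varAr ar k)) :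
    (Clause.soSubst w cl).negPairs = cl.fFreeNegPairs := by
  refine subset_antisymm ?_ (fFreeNegPairs_subset_negPairs_soSubst w)
  rw [negPairs_soSubst]
  rintro _ ⟨l, hl, hneg, rfl⟩
  exact soSubst_mem_fFreeNegPairs hl hneg (hc.2 l hl hneg) w

theorem Case2.exists_negPairs_soSubst_eq (hc : cl.Case2) :
    ∃ l₀ ∈ cl, ∀ w : Tm (H ⊕ Fin k) (varAr ar k), (Clause.soSubst w cl).negPairs =
      insert (Tm.soSubst w l₀.lhs, Tm.soSubst w l₀.rhs) cl.fFreeNegPairs := by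
  obtain ⟨l₀, hf⟩ := List.length_eq_one_iff.1 hc.2.2
  have hmem : ∀ l, (l ∈ cl ∧ l.pos = false ∧ l.countF ≠ 0) ↔ l = l₀ := by
    intro l
    simpa using congrArg (l ∈ ·) hf
  obtain ⟨hl₀, hneg₀, -⟩ := (hmem l₀).2 rfl
  refine ⟨l₀, hl₀, fun w => subset_antisymm ?_ ?_⟩
  · rw [negPairs_soSubst]
    rintro _ ⟨l, hl, hneg, rfl⟩
    by_cases h0 : l.countF = 0
    · exact Set.mem_insert_of_mem _ (soSubst_mem_fFreeNegPairs hl hneg h0 w)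
    · rw [(hmem l).1 ⟨hl, hneg, h0⟩]
      exact Set.mem_insert _ _
  · refine Set.insert_subset ?_ (fFreeNegPairs_subset_negPairs_soSubst w)
    rw [negPairs_soSubst]
    exact ⟨l₀, hl₀, hneg₀, rfl⟩

theorem Case1.valid_soSubst_of_eval_eq (hc : cl.Case1) {w w' : Tm (H ⊕ Fin k) (varAr ar k)}
    (heval : ∀ m, (Tm.soSubst w m).eval cl.model = (Tm.soSubst w' m).eval cl.model)
    (hv : (Clause.soSubst w cl).valid) : (Clause.soSubst w' cl).valid := by
  rw [valid_soSubst_iff, hc.negPairs_soSubst_eq] at hv ⊢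
  obtain ⟨l, hl, hpos, hcons⟩ := hv
  refine ⟨l, hl, hpos, ?_⟩
  obtain ⟨x, hx⟩ := Lit.exists_liftF_side (hc.1 l hl)
  have key := fun a => eqCons_iff_eval_canonStr_eq cl.subterms_subset_fFreeTerms
    cl.fFreeNegPairs_subset (a := a) (mem_fFreeTerms hl hx)
  rcases hx with hx | hx
  · rw [← hx, Tm.soSubst_liftF] at hcons ⊢
    exact ((key _).2 ((heval l.rhs).symm.trans ((key _).1 hcons.symm))).symm
  · rw [← hx, Tm.soSubst_liftF] at hcons ⊢
    exact (key _).2 ((heval l.lhs).symm.trans ((key _).1 hcons))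

theorem Case2.valid_soSubst_of_eval_eq (hc : cl.Case2) {w w' : Tm (H ⊕ Fin k) (varAr ar k)}
    (heval : ∀ m, (Tm.soSubst w m).eval cl.model = (Tm.soSubst w' m).eval cl.model)
    (hv : (Clause.soSubst w cl).valid) : (Clause.soSubst w' cl).valid := by
  obtain ⟨l₀, hl₀, hneg⟩ := hc.exists_negPairs_soSubst_eq
  rw [valid_soSubst_iff, hneg] at hv ⊢
  obtain ⟨l, hl, hpos, hcons⟩ := hv
  refine ⟨l, hl, hpos, ?_⟩
  obtain ⟨x, y, hx, hy⟩ := Lit.exists_liftF_sides (hc.2.1 l hl hpos)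
  obtain ⟨t, ht⟩ := Lit.exists_liftF_side (hc.1 l₀ hl₀)
  have key := fun {u u' : Tm H ar} (hu : u.eval cl.model = u'.eval cl.model) =>
    eqCons_insert_iff_of_eval_canonStr_eq cl.subterms_subset_fFreeTerms cl.fFreeNegPairs_subset
      hu (mem_fFreeTerms hl₀ ht) (mem_fFreeTerms hl (.inl hx)) (mem_fFreeTerms hl (.inr hy))
  rw [← hx, ← hy, Tm.soSubst_liftF, Tm.soSubst_liftF] at hcons ⊢
  rcases ht with ht | ht
  · rw [← ht, Tm.soSubst_liftF, EqCons.insert_swap] at hcons ⊢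
    exact (key (heval l₀.rhs)).1 hcons
  · rw [← ht, Tm.soSubst_liftF] at hcons ⊢
    exact (key (heval l₀.lhs)).1 hcons

theorem Regular.isRecognizable_setOf_valid_soSubst (hreg : cl.Regular) :
    IsRecognizable {w : Tm (H ⊕ Fin k) (varAr ar k) | (Clause.soSubst w cl).valid} := by
  have := finite_canonStr (E := cl.fFreeNegPairs) (fFreeTerms_finite cl)
  refine ⟨cl.model.clone k, inferInstanceAs (Finite ((Fin k → cl.model.D) → cl.model.D)),
    fun w w' hw hv => ?_⟩
  have heval : ∀ m, (Tm.soSubst w m).eval cl.model = (Tm.soSubst w' m).eval cl.model :=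
    fun m => by rw [Tm.eval_soSubst, Tm.eval_soSubst, hw]
  rcases hreg with hc | hc
  · exact hc.valid_soSubst_of_eval_eq heval hv
  · exact hc.valid_soSubst_of_eval_eq heval hv

end Clause

theorem RegEUF.isRecognizable_setOf_solves (φ : RegEUF H ar k) :
    IsRecognizable {w | φ.solves w} := by
  have hφ : {w | φ.solves w} =
      ⋂ c : {c // c ∈ φ.clauses}, {w | (Clause.soSubst w c.1).valid} := by
    ext w
    simp [RegEUF.solves]
  rw [hφ]
  have : Finite {c // c ∈ φ.clauses} := φ.clauses.finite_toSet.to_subtype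
  exact IsRecognizable.iInter fun c => (φ.regular c.1 c.2).isRecognizable_setOf_valid_soSubst

end Clauses

section Grammar

variable {W : Type} {arW : W → ℕ} (G : RTG W arW)

namespace RTG

def groundSubterms : Set (Tm W arW) :=
  {x | ∃ p ∈ G.prods, ∃ i w, p.2.2 i = .inr w ∧ x ∈ w.subterms}

theorem groundSubterms_finite : G.groundSubterms.Finite := by
  refine (G.finite_prods.biUnion fun p _ => Set.finite_iUnion fun i =>
    (?_ : (Sum.elim (fun _ => ∅) Tm.subterms (p.2.2 i) : Set (Tm W arW)).Finite)).subset ?_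
  · cases p.2.2 i with
    | inl => exact Set.finite_empty
    | inr w => exact w.subterms_finite
  · rintro x ⟨p, hp, i, w, hw, hx⟩
    exact Set.mem_biUnion hp (Set.mem_iUnion_of_mem i (by rw [hw]; exact hx))

theorem subterms_subset_groundSubterms :
    ∀ x ∈ G.groundSubterms, x.subterms ⊆ G.groundSubterms := by
  rintro x ⟨p, hp, i, w, hw, hx⟩ z hz
  exact ⟨p, hp, i, w, hw, Tm.subterms_subset hx hz⟩

def stateStr : Str W arW where
  D := Set G.N × Set G.groundSubterms
  interp g d :=
    ({A | ∃ args, (A, ⟨g, args⟩) ∈ G.prods ∧ ∀ i,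
        (∀ B, args i = .inl B → B ∈ (d i).1) ∧
        (∀ w, args i = .inr w → ∃ h : w ∈ G.groundSubterms, ⟨w, h⟩ ∈ (d i).2)},
     {u | ∃ us : Fin (arW g) → G.groundSubterms, u.1 = .app g (fun i => (us i).1) ∧
        ∀ i, us i ∈ (d i).2})

theorem eval_stateStr (t : Tm W arW) :
    t.eval G.stateStr = ({A | G.Derives A t}, {u | t = u.1}) := by
  induction t with
  | app g ts ih =>
    change G.stateStr.interp g (fun i => (ts i).eval G.stateStr) = _
    simp only [ih]
    refine Prod.ext (Set.ext fun A => ⟨?_, ?_⟩) (Set.ext fun u => ⟨?_, ?_⟩)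
    · rintro ⟨args, hmem, hargs⟩
      exact RTG.Derives.step A g args ts hmem (fun i B hB => (hargs i).1 B hB)
        (fun i w hw => ((hargs i).2 w hw).2)
    · rintro ⟨_, _, args, _, hmem, hnt, htm⟩
      exact ⟨args, hmem, fun i => ⟨hnt i, fun w hw =>
        ⟨⟨_, hmem, i, w, hw, w.mem_subterms_self⟩, htm i w hw⟩⟩⟩
    · rintro ⟨us, hu, hus⟩
      change Tm.app g ts = u.1
      rw [hu]
      exact congrArg (Tm.app g) (funext hus)
    · intro (hu : Tm.app g ts = u.1)
      refine ⟨fun i => ⟨ts i, G.subterms_subset_groundSubterms _ u.2 ?_⟩, hu.symm,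
        fun i => rfl⟩
      rw [← hu]
      exact Tm.subterms_app_subset ts i (ts i).mem_subterms_self

theorem isRecognizable_lang : IsRecognizable G.lang := by
  have := G.groundSubterms_finite.to_subtype
  refine ⟨G.stateStr, inferInstanceAs (Finite (Set G.N × Set G.groundSubterms)),
    fun t t' h ht => ?_⟩
  rw [eval_stateStr, eval_stateStr] at h
  exact (Set.ext_iff.1 (congrArg Prod.fst h) G.start).1 ht

end RTG

end Grammar

section FromDTA

variable {F G : Type} {ar : F → ℕ} {arG : G → ℕ} (A : DTA F ar)

namespace DTA

theorem run_app_eq_some_iff {f : F} {a : Fin (ar f) → Tm F ar} {q : A.Q} :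
    A.run (.app f a) = some q ↔
      ∃ qs, (∀ i, A.run (a i) = some (qs i)) ∧ A.δ f qs = some q := by
  simp [DTA.run, Option.bind_eq_some_iff, finSeq_eq_some_iff]

/-- The nonterminal `some q'` of `A.toRTG` generates the terms with run `q'`, the start
symbol `none` the accepted terms. -/
def IsTarget : Option A.Q → A.Q → Prop
  | none, q => q ∈ A.final
  | some q', q => q = q'

variable [Finite F] (h : F → G) (hh : ∀ f, arG (h f) = ar f)

def toRTG : RTG G arG where
  N := Option A.Q
  start := none
  prods := {p | ∃ (f : F) (qs : Fin (ar f) → A.Q) (q : A.Q), A.δ f qs = some q ∧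
    A.IsTarget p.1 q ∧ p.2 = ⟨h f, fun i => .inl (some (qs (Fin.cast (hh f) i)))⟩}
  finite_prods := by
    refine (Set.finite_range fun (p : Option A.Q × (Σ f : F, (Fin (ar f) → A.Q))) =>
      (((p.1, ⟨h p.2.1, fun i => .inl (some (p.2.2 (Fin.cast (hh p.2.1) i)))⟩) :
        Option A.Q × Σ g : G, (Fin (arG g) → Option A.Q ⊕ Tm G arG)))).subset ?_
    rintro ⟨B, _⟩ ⟨f, qs, -, -, -, rfl⟩
    exact ⟨(B, ⟨f, qs⟩), rfl⟩

theorem derives_toRTG_iff {B : (A.toRTG h hh).N} {t' : Tm G arG} :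
    (A.toRTG h hh).Derives B t' ↔
      ∃ t : Tm F ar, t.rename h hh = t' ∧ ∃ q, A.run t = some q ∧ A.IsTarget B q := by
  constructor
  · intro hd
    induction hd with
    | step B g args ts hmem _ _ ih =>
      obtain ⟨f, qs, q, hδ, hB, he⟩ := hmem
      obtain ⟨rfl, hargs⟩ := Sigma.mk.inj_iff.1 he
      obtain rfl := eq_of_heq hargs
      choose t ht q' hq' hq'' using fun i => ih i _ rfl
      refine ⟨.app f fun j => t (Fin.cast (hh f).symm j), congrArg _ (funext ht), q,
        (A.run_app_eq_some_iff).2 ⟨qs, fun j => ?_, hδ⟩, hB⟩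
      exact (hq' _).trans (congrArg some (hq'' _))
  · rintro ⟨t, rfl, q, hrun, hB⟩
    induction t generalizing B q with
    | app f a ih =>
      obtain ⟨qs, hqs, hδ⟩ := (A.run_app_eq_some_iff).1 hrun
      refine RTG.Derives.step (G := A.toRTG h hh) B (h f) _ _ ⟨f, qs, q, hδ, hB, rfl⟩ ?_
        (fun _ _ he => nomatch he)
      rintro i _ ⟨⟩
      exact ih _ _ (hqs _) rfl

theorem lang_toRTG : (A.toRTG h hh).lang = Tm.rename h hh '' A.lang := by
  ext t'
  refine (derives_toRTG_iff A h hh).trans ⟨?_, ?_⟩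
  · rintro ⟨t, ht, q, hrun, hq⟩
    exact ⟨t, ⟨q, hq, hrun⟩, ht⟩
  · rintro ⟨t, ⟨q, hq, hrun⟩, ht⟩
    exact ⟨t, ht, q, hrun, hq⟩

end DTA

end FromDTA

/-- A tree language `L ⊆ T(Σ, {x₁,…,x_k})` is regular if and only if it
is the solution set of a regular SyGuS-EUF problem: there are a finite extension `Σ'` of
`Σ` by constants, a regular-EUF formula `φ` over `Σ' ∪ {f}` with `f` of arity `k`, and a
`Σ'`-compatible regular tree grammar `G` generating only terms of `T(Σ, {x₁,…,x_k})`,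
such that `L = {w ∈ L(G) : φ{w/f} is valid}`. -/
theorem regular_iff_solution_set_of_regular_sygus_euf {F : Type} [Fintype F]
    (ar : F → ℕ) (k : ℕ) (L : Set (Tm (F ⊕ Fin k) (varAr ar k))) :
    IsRegularTreeLang L ↔
      ∃ (c : ℕ) (φ : RegEUF (F ⊕ Fin c) (Sum.elim ar fun _ => 0) k)
        (G : RTG ((F ⊕ Fin c) ⊕ Fin k) (varAr (Sum.elim ar fun _ => 0) k)),
        G.lang ⊆ Set.range (embedW (F := F) (ar := ar) (k := k) (c := c)) ∧
        L = {w : Tm (F ⊕ Fin k) (varAr ar k) |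
              embedW w ∈ G.lang ∧ φ.solves (embedW w)} := by
  constructor
  · rintro ⟨A, rfl⟩
    have hemb : Function.Injective (embedW (F := F) (ar := ar) (k := k) (c := 0)) :=
      Tm.rename_injective (Sum.map_injective.2 ⟨Sum.inl_injective, Function.injective_id⟩)
    refine ⟨0, ⟨[], nofun⟩, A.toRTG (Sum.map Sum.inl id) (by rintro (g | i) <;> rfl),
      ?_, ?_⟩
    · rw [DTA.lang_toRTG]
      exact Set.image_subset_range _ _
    · ext w
      simp only [DTA.lang_toRTG]
      exact ⟨fun hw => ⟨Set.mem_image_of_mem _ hw, nofun⟩,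
        fun hw => hemb.mem_set_image.1 hw.1⟩
  · rintro ⟨c, φ, G, -, rfl⟩
    exact (G.isRecognizable_lang.inter φ.isRecognizable_setOf_solves).preimage_rename
      _ _ |>.isRegularTreeLang

end SyGuS
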